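/- Let n ≥ 1. Let A, B, C, D be Hadamard matrices of dimension n, let (H^d)_{d∈[n]} and (K^c)_{c∈[n]} be n-controlled families of Hadamard matrices of dimension n, and let Q and P be quantum Latin squares of dimension n. For a, b, c, d ∈ [n], define the matrix U_{(a,b,c,d)} with rows and columns indexed by [n]×[n], whose entry at row (e,f) and column (g,h) is (1/n) · ∑_{r,s∈[n]} A_{f,h} · B_{s,f} · C_{r,h} · D_{s,r} · H^d_{a,s} · K^c_{b,r} · Q_{d,s,e} · P_{r,c,g}. Then (U_{(a,b,c,d)})_{(a,b,c,d)∈[n]⁴} is a unitary error basis of dimension n². -/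

import Mathlib

open scoped ComplexConjugate Matrix

noncomputable section

/-- A (possibly rectangularly-indexed) complex Hadamard matrix: all entries have
modulus 1, and distinct rows are orthogonal, with `∑ k, H i k * conj (H j k) = n·δ_{i,j}`
where `n` is the dimension (the common cardinality of the row and column index sets). -/
def IsHadamard {R C : Type*} [Fintype R] [Fintype C] [DecidableEq R]
    (H : Matrix R C ℂ) : Prop :=
  Fintype.card R = Fintype.card C ∧
  (∀ i j, ‖H i j‖ = 1) ∧
  (∀ i j, ∑ k, H i k * conj (H j k) = if i = j then (Fintype.card R : ℂ) else 0)

/-- A quantum Latin square of dimension `n`: an `n × n` grid (rows and columns indexed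
by `A`, with `|A| = n`) of vectors in `ℂ^n` (coordinates indexed by `X`, `|X| = n`),
such that every row and every column is an orthonormal basis. -/
def IsQLS {A X : Type*} [Fintype A] [Fintype X] [DecidableEq A]
    (Q : A → A → X → ℂ) : Prop :=
  Fintype.card X = Fintype.card A ∧
  (∀ a b c, ∑ i, conj (Q a b i) * Q a c i = if b = c then 1 else 0) ∧
  (∀ a b c, ∑ i, conj (Q a c i) * Q b c i = if a = b then 1 else 0)

/-- A unitary error basis of dimension `n`: a family of `n²` unitary matrices
(rows indexed by `R`, columns by `C`, both of cardinality `n`; elements indexed by `A`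
with `|A| = n²`) that are orthogonal with respect to the trace inner product:
`Tr(U_a† U_b) = n·δ_{a,b}`. -/
def IsUEB {A R C : Type*} [Fintype A] [Fintype R] [Fintype C]
    [DecidableEq A] [DecidableEq R] [DecidableEq C]
    (U : A → Matrix R C ℂ) : Prop :=
  Fintype.card A = (Fintype.card R) ^ 2 ∧
  (∀ a, U a * (U a)ᴴ = 1 ∧ (U a)ᴴ * U a = 1) ∧
  (∀ a b, Matrix.trace ((U a)ᴴ * U b) = if a = b then (Fintype.card R : ℂ) else 0)

/-!
Reading the sums over `r, s` as matrix products, `U_{(a,b,c,d)}` factors as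
`(Q̂_d ⊗ 1) Φ (n⁻¹ D ⊗ A) Ψ (P̂_c ⊗ 1)`, with `Q̂_d`, `P̂_c` the row `d` of `Q` and the column `c`
of `P` (unitary, being orthonormal bases), `n⁻¹ D ⊗ A = n^{-1/2} D ⊗ n^{-1/2} A` unitary, and
`Φ`, `Ψ` diagonal with the unimodular entries `H^d_{a,s} B_{s,f}` and `C_{r,h} K^c_{b,r}`.

Pulling the sum over `r, s` outside instead, `U_{(a,b,c,d)}` is a combination, with coefficients
`n⁻¹ D_{s,r} H^d_{a,s} K^c_{b,r}`, of the matrices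
`diag(Q_{d,s,e} B_{s,f}) [A_{f,h}] diag(P_{r,c,g} C_{r,h})`.
As `A` is unimodular, the trace pairing of two of these is a sum over `(e,f)` times a sum over
`(g,h)`; the rows of `B` and `C` make it vanish unless `s = s'` and `r = r'`, and then the QLS
conditions force `d = d'` and `c = c'`. What remains is the product of the inner products of rows
`a, a'` of `H^d` and rows `b, b'` of `K^c`.
-/

open Matrix (unitaryGroup mem_unitaryGroup_iff mem_unitaryGroup_iff' of diagonal)
open scoped Kronecker

lemma Complex.conj_mul_self_of_norm_eq_one {z : ℂ} (hz : ‖z‖ = 1) : conj z * z = 1 := by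
  simp [Complex.conj_mul', hz]

lemma Complex.inv_ofReal_sqrt_mul_self {x : ℝ} (hx : 0 ≤ x) :
    ((√x : ℝ) : ℂ)⁻¹ * ((√x : ℝ) : ℂ)⁻¹ = (x : ℂ)⁻¹ := by
  rw [← mul_inv, ← Complex.ofReal_mul, Real.mul_self_sqrt hx]

section Hadamard

lemma IsHadamard.mul_conjTranspose {R C : Type*} [Fintype R] [Fintype C] [DecidableEq R]
    {H : Matrix R C ℂ} (hH : IsHadamard H) : H * Hᴴ = (Fintype.card R : ℂ) • 1 := by
  ext i j
  simpa [Matrix.mul_apply, Matrix.one_apply] using hH.2.2 i j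

lemma IsHadamard.sum_conj_mul {R C : Type*} [Fintype R] [Fintype C] [DecidableEq R]
    {H : Matrix R C ℂ} (hH : IsHadamard H) (i j : R) :
    ∑ k, conj (H i k) * H j k = if i = j then (Fintype.card R : ℂ) else 0 := by
  have := congrArg conj (hH.2.2 i j)
  simp only [map_sum, map_mul, Complex.conj_conj, apply_ite conj, map_natCast, map_zero] at this
  simpa only [mul_comm] using this

variable {ι : Type*} [Fintype ι] [DecidableEq ι] {H : Matrix ι ι ℂ}

lemma IsHadamard.inv_sqrt_smul_mem_unitaryGroup (hH : IsHadamard H) :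
    ((√(Fintype.card ι) : ℝ) : ℂ)⁻¹ • H ∈ unitaryGroup ι ℂ := by
  rcases isEmpty_or_nonempty ι with hι | hι
  · rw [mem_unitaryGroup_iff]; exact Subsingleton.elim _ _
  rw [mem_unitaryGroup_iff, Matrix.star_eq_conjTranspose, Matrix.conjTranspose_smul,
    smul_mul_smul_comm, hH.mul_conjTranspose, smul_smul]
  convert one_smul ℂ (1 : Matrix ι ι ℂ) using 2
  rw [Complex.star_def, map_inv₀, Complex.conj_ofReal,
    Complex.inv_ofReal_sqrt_mul_self (Nat.cast_nonneg _), Complex.ofReal_natCast,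
    inv_mul_cancel₀ (by simp)]

lemma IsHadamard.inv_card_smul_kronecker_mem_unitaryGroup {D : Matrix ι ι ℂ}
    (hD : IsHadamard D) (hH : IsHadamard H) :
    (Fintype.card ι : ℂ)⁻¹ • (D ⊗ₖ H) ∈ unitaryGroup (ι × ι) ℂ := by
  have := Matrix.kronecker_mem_unitary hD.inv_sqrt_smul_mem_unitaryGroup
    hH.inv_sqrt_smul_mem_unitaryGroup
  rwa [Matrix.smul_kronecker, Matrix.kronecker_smul, smul_smul,
    Complex.inv_ofReal_sqrt_mul_self (Nat.cast_nonneg _), Complex.ofReal_natCast] at this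

end Hadamard

lemma Matrix.diagonal_mem_unitaryGroup {ι : Type*} [Fintype ι] [DecidableEq ι] {v : ι → ℂ}
    (hv : ∀ i, ‖v i‖ = 1) : diagonal v ∈ unitaryGroup ι ℂ := by
  rw [mem_unitaryGroup_iff', Matrix.star_eq_conjTranspose, Matrix.diagonal_conjTranspose,
    Matrix.diagonal_mul_diagonal, ← Matrix.diagonal_one]
  simp [Complex.conj_mul_self_of_norm_eq_one (hv _)]

section QLS

variable {ι : Type*} [Fintype ι] [DecidableEq ι] {Q : ι → ι → ι → ℂ}

lemma IsQLS.flip (hQ : IsQLS Q) : IsQLS (fun a b => Q b a) :=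
  ⟨hQ.1, fun a b c => hQ.2.2 b c a, fun a b c => hQ.2.1 c a b⟩

lemma IsQLS.transpose_row_mem_unitaryGroup (hQ : IsQLS Q) (a : ι) :
    (of (Q a))ᵀ ∈ unitaryGroup ι ℂ := by
  rw [mem_unitaryGroup_iff']
  ext b c
  simpa [Matrix.mul_apply, Matrix.one_apply] using hQ.2.1 a b c

lemma IsQLS.column_mem_unitaryGroup (hQ : IsQLS Q) (b : ι) :
    of (fun a i => Q a b i) ∈ unitaryGroup ι ℂ :=
  Matrix.transpose_mem_unitaryGroup_iff.mp (hQ.flip.transpose_row_mem_unitaryGroup b)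

lemma IsQLS.sum_conj_mul_mul_hadamard {B : Matrix ι ι ℂ} (hQ : IsQLS Q) (hB : IsHadamard B)
    (d d' s s' : ι) :
    ∑ ef : ι × ι, conj (Q d s ef.1 * B s ef.2) * (Q d' s' ef.1 * B s' ef.2) =
      if s = s' ∧ d = d' then (Fintype.card ι : ℂ) else 0 := by
  simp only [Fintype.sum_prod_type, map_mul, mul_mul_mul_comm _ (conj (B s _)),
    ← Finset.sum_mul_sum, hB.sum_conj_mul]
  by_cases hs : s = s'
  · subst hs
    simp [hQ.2.2 d d' s]
  · simp [hs]

end QLS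

lemma Matrix.trace_conjTranspose_diagonal_mul_mul_diagonal {m n : Type*} [Fintype m] [Fintype n]
    [DecidableEq m] [DecidableEq n] {M : Matrix m n ℂ} (hM : ∀ i j, ‖M i j‖ = 1)
    (x x' : m → ℂ) (y y' : n → ℂ) :
    ((diagonal x * M * diagonal y)ᴴ * (diagonal x' * M * diagonal y')).trace =
      (∑ i, conj (x i) * x' i) * ∑ j, conj (y j) * y' j := by
  have hentry (v : m → ℂ) (w : n → ℂ) (i j) :
      (diagonal v * M * diagonal w) i j = v i * M i j * w j := by
    rw [Matrix.mul_diagonal, Matrix.diagonal_mul]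
  simp_rw [Matrix.trace, Matrix.diag, Matrix.mul_apply (M := Matrix.conjTranspose _),
    Matrix.conjTranspose_apply, hentry, Finset.sum_mul_sum]
  rw [Finset.sum_comm]
  refine Fintype.sum_congr _ _ fun i => Fintype.sum_congr _ _ fun j => ?_
  have := Complex.conj_mul_self_of_norm_eq_one (hM i j)
  simp only [Complex.star_def, map_mul]
  linear_combination (conj (x i) * x' i * (conj (y j) * y' j)) * this

lemma Matrix.trace_conjTranspose_sum_smul_mul_sum_smul {κ m : Type*} [Fintype κ] [Fintype m]
    (c c' : κ → ℂ) (W W' : κ → Matrix m m ℂ) :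
    ((∑ i, c i • W i)ᴴ * ∑ j, c' j • W' j).trace =
      ∑ i, ∑ j, conj (c i) * c' j * ((W i)ᴴ * W' j).trace := by
  simp only [Matrix.conjTranspose_sum, Matrix.conjTranspose_smul, Finset.sum_mul, Finset.mul_sum,
    Matrix.smul_mul, Matrix.mul_smul, Matrix.trace_sum, Matrix.trace_smul, smul_smul, smul_eq_mul,
    Complex.star_def]
  rw [Finset.sum_comm]
  exact Fintype.sum_congr _ _ fun i => Fintype.sum_congr _ _ fun j => by ring

section EightAry

variable {ι : Type*} [Fintype ι] [DecidableEq ι]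

def eightAryUEB (A B C D : Matrix ι ι ℂ) (H K : ι → Matrix ι ι ℂ) (Q P : ι → ι → ι → ℂ)
    (a b c d : ι) : Matrix (ι × ι) (ι × ι) ℂ :=
  of fun ef gh => (Fintype.card ι : ℂ)⁻¹ * ∑ r, ∑ s,
    A ef.2 gh.2 * B s ef.2 * C r gh.2 * D s r * H d a s * K c b r * Q d s ef.1 * P r c gh.1

variable {A B C D : Matrix ι ι ℂ} {H K : ι → Matrix ι ι ℂ} {Q P : ι → ι → ι → ℂ}

lemma eightAryUEB_eq_mul (a b c d : ι) :
    eightAryUEB A B C D H K Q P a b c d =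
      ((of (Q d))ᵀ ⊗ₖ 1) *
        (diagonal (fun sf => H d a sf.1 * B sf.1 sf.2) * ((Fintype.card ι : ℂ)⁻¹ • D ⊗ₖ A) *
          diagonal (fun rh => C rh.1 rh.2 * K c b rh.1)) *
        (of (fun r g => P r c g) ⊗ₖ 1) := by
  ext ⟨e, f⟩ ⟨g, h⟩
  simp only [eightAryUEB, Matrix.of_apply, Matrix.mul_apply, Matrix.smul_apply,
    Matrix.kroneckerMap_apply, Matrix.transpose_apply, Matrix.one_apply, Matrix.diagonal_apply,
    mul_ite, ite_mul, mul_one, mul_zero, zero_mul, Finset.sum_ite_eq, Finset.sum_ite_eq',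
    Finset.mem_univ, if_true, Fintype.sum_prod_type, smul_eq_mul, Finset.mul_sum, Finset.sum_mul]
  exact Fintype.sum_congr _ _ fun r => Fintype.sum_congr _ _ fun s => by ring

lemma eightAryUEB_mem_unitaryGroup (hA : IsHadamard A) (hB : IsHadamard B) (hC : IsHadamard C)
    (hD : IsHadamard D) (hH : ∀ d, IsHadamard (H d)) (hK : ∀ c, IsHadamard (K c))
    (hQ : IsQLS Q) (hP : IsQLS P) (a b c d : ι) :
    eightAryUEB A B C D H K Q P a b c d ∈ unitaryGroup (ι × ι) ℂ := by
  rw [eightAryUEB_eq_mul]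
  refine mul_mem (mul_mem ?_ (mul_mem (mul_mem ?_ ?_) ?_)) ?_
  · exact Matrix.kronecker_mem_unitary (hQ.transpose_row_mem_unitaryGroup d) (one_mem _)
  · exact Matrix.diagonal_mem_unitaryGroup fun sf => by
      rw [norm_mul, (hH d).2.1, hB.2.1, one_mul]
  · exact hD.inv_card_smul_kronecker_mem_unitaryGroup hA
  · exact Matrix.diagonal_mem_unitaryGroup fun rh => by
      rw [norm_mul, hC.2.1, (hK c).2.1, one_mul]
  · exact Matrix.kronecker_mem_unitary (hP.column_mem_unitaryGroup c) (one_mem _)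

lemma eightAryUEB_eq_sum (a b c d : ι) :
    eightAryUEB A B C D H K Q P a b c d =
      ∑ rs : ι × ι, ((Fintype.card ι : ℂ)⁻¹ * (D rs.2 rs.1 * H d a rs.2 * K c b rs.1)) •
        (diagonal (fun ef => Q d rs.2 ef.1 * B rs.2 ef.2) * A.submatrix Prod.snd Prod.snd *
          diagonal (fun gh => P rs.1 c gh.1 * C rs.1 gh.2)) := by
  ext ⟨e, f⟩ ⟨g, h⟩
  simp only [eightAryUEB, Matrix.of_apply, Matrix.sum_apply, Matrix.smul_apply, smul_eq_mul,
    Matrix.mul_diagonal, Matrix.diagonal_mul, Matrix.submatrix_apply, Fintype.sum_prod_type,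
    Finset.mul_sum]
  exact Fintype.sum_congr _ _ fun r => Fintype.sum_congr _ _ fun s => by ring

lemma trace_conjTranspose_eightAryUEB_mul (hA : ∀ i j, ‖A i j‖ = 1) (hB : IsHadamard B)
    (hC : IsHadamard C) (hD : ∀ i j, ‖D i j‖ = 1) (hH : ∀ d, IsHadamard (H d))
    (hK : ∀ c, IsHadamard (K c)) (hQ : IsQLS Q) (hP : IsQLS P) (a b c d a' b' c' d' : ι) :
    ((eightAryUEB A B C D H K Q P a b c d)ᴴ * eightAryUEB A B C D H K Q P a' b' c' d').trace =
      if a = a' ∧ b = b' ∧ c = c' ∧ d = d' then (Fintype.card ι : ℂ) ^ 2 else 0 := by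
  rcases isEmpty_or_nonempty ι with hι | hι
  · simp [Matrix.trace]
  rw [eightAryUEB_eq_sum, eightAryUEB_eq_sum, Matrix.trace_conjTranspose_sum_smul_mul_sum_smul]
  simp_rw [Matrix.trace_conjTranspose_diagonal_mul_mul_diagonal
      (M := A.submatrix Prod.snd Prod.snd) (fun i j => hA i.2 j.2),
    hQ.sum_conj_mul_mul_hadamard hB, hP.flip.sum_conj_mul_mul_hadamard hC]
  by_cases hcd : c = c' ∧ d = d'
  swap
  · rcases not_and_or.mp hcd with h | h <;> simp [h]
  obtain ⟨rfl, rfl⟩ := hcd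
  have hpair (x y : ι × ι) : (x.2 = y.2 ∧ x.1 = y.1) ↔ x = y := by rw [and_comm, Prod.ext_iff]
  simp only [and_true, ite_zero_mul_ite_zero, hpair]
  simp only [mul_ite, mul_zero, Finset.sum_ite_eq, Finset.mem_univ, if_true]
  calc _ = ∑ rs : ι × ι, conj (H d a rs.2) * H d a' rs.2 * (conj (K c b rs.1) * K c b' rs.1) := by
        refine Fintype.sum_congr _ _ fun rs => ?_
        have := Complex.conj_mul_self_of_norm_eq_one (hD rs.2 rs.1)
        simp only [map_mul, map_inv₀, map_natCast]
        field_simp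
        linear_combination
          (conj (H d a rs.2) * H d a' rs.2 * (conj (K c b rs.1) * K c b' rs.1)) * this
    _ = (∑ s, conj (H d a s) * H d a' s) * ∑ r, conj (K c b r) * K c b' r := by
        rw [Finset.sum_mul_sum, Fintype.sum_prod_type, Finset.sum_comm]
    _ = _ := by
        rw [(hH d).sum_conj_mul, (hK c).sum_conj_mul, ite_zero_mul_ite_zero, sq]

end EightAry

theorem eight_ary_ueb_general (n : ℕ)
    (A B C D : Matrix (Fin n) (Fin n) ℂ)
    (H K : Fin n → Matrix (Fin n) (Fin n) ℂ)
    (Q P : Fin n → Fin n → Fin n → ℂ)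
    (hA : IsHadamard A) (hB : IsHadamard B) (hC : IsHadamard C) (hD : IsHadamard D)
    (hH : ∀ d, IsHadamard (H d)) (hK : ∀ c, IsHadamard (K c))
    (hQ : IsQLS Q) (hP : IsQLS P) :
    IsUEB (fun abcd : Fin n × Fin n × Fin n × Fin n =>
      Matrix.of fun (ef gh : Fin n × Fin n) =>
        ((n : ℂ))⁻¹ * ∑ r : Fin n, ∑ s : Fin n,
          A ef.2 gh.2 * B s ef.2 * C r gh.2 * D s r *
            H abcd.2.2.2 abcd.1 s * K abcd.2.2.1 abcd.2.1 r *
            Q abcd.2.2.2 s ef.1 * P r abcd.2.2.1 gh.1) := by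
  suffices h : IsUEB fun x : Fin n × Fin n × Fin n × Fin n =>
      eightAryUEB A B C D H K Q P x.1 x.2.1 x.2.2.1 x.2.2.2 by
    simpa only [eightAryUEB, Fintype.card_fin] using h
  refine ⟨by simp only [Fintype.card_prod, Fintype.card_fin]; ring, fun x => ?_,
    fun ⟨a, b, c, d⟩ ⟨a', b', c', d'⟩ => ?_⟩
  · obtain ⟨h₁, h₂⟩ := Unitary.mem_iff.mp (eightAryUEB_mem_unitaryGroup hA hB hC hD hH hK hQ hP
      x.1 x.2.1 x.2.2.1 x.2.2.2)
    exact ⟨h₂, h₁⟩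
  · rw [trace_conjTranspose_eightAryUEB_mul hA.2.1 hB hC hD.2.1 hH hK hQ hP]
    simp [Prod.ext_iff, sq]

/-- four n-dimensional Hadamard matrices, two n-controlled families of
n-dimensional Hadamard matrices, and two n-dimensional quantum Latin squares produce
an n²-dimensional UEB whose entry at row (e,f) and column (g,h) is
`(1/n) · ∑_{r,s} A_{f,h} · B_{s,f} · C_{r,h} · D_{s,r} · H^d_{a,s} · K^c_{b,r} · Q_{d,s,e} · P_{r,c,g}`. -/
theorem eight_ary_ueb (n : ℕ) (hn : 1 ≤ n)
    (A B C D : Matrix (Fin n) (Fin n) ℂ)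
    (H K : Fin n → Matrix (Fin n) (Fin n) ℂ)
    (Q P : Fin n → Fin n → Fin n → ℂ)
    (hA : IsHadamard A) (hB : IsHadamard B) (hC : IsHadamard C) (hD : IsHadamard D)
    (hH : ∀ d, IsHadamard (H d)) (hK : ∀ c, IsHadamard (K c))
    (hQ : IsQLS Q) (hP : IsQLS P) :
    IsUEB (fun abcd : Fin n × Fin n × Fin n × Fin n =>
      Matrix.of fun (ef gh : Fin n × Fin n) =>
        ((n : ℂ))⁻¹ * ∑ r : Fin n, ∑ s : Fin n,
          A ef.2 gh.2 * B s ef.2 * C r gh.2 * D s r *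
            H abcd.2.2.2 abcd.1 s * K abcd.2.2.1 abcd.2.1 r *
            Q abcd.2.2.2 s ef.1 * P r abcd.2.2.1 gh.1) :=
  eight_ary_ueb_general n A B C D H K Q P hA hB hC hD hH hK hQ hP
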